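/- Let E be a real inner product space and let F : E → ℝ be differentiable with C-Lipschitz gradient and bounded below by F* ∈ ℝ. Fix τ > 0, G ≥ 0, G' ≥ 0, b ≥ 0, and set τ_n = τ/√(n+1). Let (h_n)_{n≥0} be vectors in E and define θ_{n+1} = θ_n − τ_n h_n from θ₀ ∈ E. Suppose for every n: ‖h_n‖ ≤ G, ‖h_n − ∇F(θ_n)‖ ≤ b, and ‖∇F(θ_n)‖ ≤ G'. Then for every N ≥ 1: (1/N) Σ_{n=0}^{N−1} ‖∇F(θ_n)‖² ≤ (F(θ₀) − F*)/(τ √N) + (C G² τ / 2)(log N + 1)/√N + 2 G' b. -/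

import Mathlib

open Finset RealInnerProductSpace

/-! The descent lemma for a `C`-Lipschitz gradient, together with
`⟪∇F θ, h⟫ ≥ ‖∇F θ‖² - ‖∇F θ‖ ‖h - ∇F θ‖`, bounds each step `θ_{n+1} = θ_n - τ_n h_n` by
`τ_n ‖∇F θ_n‖² ≤ F θ_n - F θ_{n+1} + C τ_n² ‖h_n‖² / 2 + τ_n ‖∇F θ_n‖ ‖h_n - ∇F θ_n‖`.
Summing over `n < N`, the `F`-differences telescope to at most `F θ₀ - F*`, and
`∑ 1/(n+1) ≤ log N + 1`, `∑ 1/√(n+1) ≤ 2√N` control the curvature and bias terms; on the left,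
`τ_n ≥ τ/√N`. Dividing by `τ√N` gives the rate. -/

theorem sum_range_one_div_sqrt_succ_le (N : ℕ) :
    ∑ n ∈ range N, 1 / √((n : ℝ) + 1) ≤ 2 * √N := by
  induction N with
  | zero => simp
  | succ N ih =>
    rw [sum_range_succ, Nat.cast_succ]
    have hpos : 0 < √((N : ℝ) + 1) := Real.sqrt_pos.2 (by positivity)
    have hsq : √((N : ℝ) + 1) ^ 2 = √(N : ℝ) ^ 2 + 1 := by
      rw [Real.sq_sqrt (by positivity), Real.sq_sqrt (by positivity)]
    -- `1 / √(N+1) ≤ 2 (√(N+1) - √N)` is `(√(N+1) - √N)² ≥ 0` in disguise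
    have hstep : 1 / √((N : ℝ) + 1) ≤ 2 * √((N : ℝ) + 1) - 2 * √N := by
      rw [div_le_iff₀ hpos]
      nlinarith [sq_nonneg (√((N : ℝ) + 1) - √N)]
    linarith

theorem sum_range_one_div_succ_le_log_add_one (N : ℕ) :
    ∑ n ∈ range N, 1 / ((n : ℝ) + 1) ≤ Real.log N + 1 := by
  have h := harmonic_le_one_add_log N
  simp only [harmonic, Rat.cast_sum, Rat.cast_inv, Nat.cast_succ] at h
  simpa [one_div, add_comm] using h

section StepSchedule

variable {τ : ℝ} {a : ℕ → ℝ} {A : ℝ}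

theorem div_sqrt_mul_sum_range_le (hτ : 0 ≤ τ) (ha : ∀ n, 0 ≤ a n) (N : ℕ) :
    τ / √N * ∑ n ∈ range N, a n ≤ ∑ n ∈ range N, τ / √((n : ℝ) + 1) * a n := by
  rw [mul_sum]
  refine sum_le_sum fun n hn => ?_
  have : √((n : ℝ) + 1) ≤ √N := Real.sqrt_le_sqrt (by exact_mod_cast mem_range.1 hn)
  gcongr
  exact ha n

theorem sum_range_div_sqrt_succ_sq_mul_le (hA : 0 ≤ A) (ha : ∀ n, a n ≤ A) (N : ℕ) :
    ∑ n ∈ range N, (τ / √((n : ℝ) + 1)) ^ 2 * a n ≤ A * τ ^ 2 * (Real.log N + 1) := by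
  grw [← sum_range_one_div_succ_le_log_add_one, mul_sum]
  refine sum_le_sum fun n _ => ?_
  calc (τ / √((n : ℝ) + 1)) ^ 2 * a n ≤ (τ / √((n : ℝ) + 1)) ^ 2 * A := by gcongr; exact ha n
    _ = A * τ ^ 2 * (1 / (n + 1)) := by rw [div_pow, Real.sq_sqrt (by positivity)]; ring

theorem sum_range_div_sqrt_succ_mul_le (hτ : 0 ≤ τ) (hA : 0 ≤ A) (ha : ∀ n, a n ≤ A) (N : ℕ) :
    ∑ n ∈ range N, τ / √((n : ℝ) + 1) * a n ≤ A * τ * (2 * √N) := by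
  grw [← sum_range_one_div_sqrt_succ_le, mul_sum]
  refine sum_le_sum fun n _ => ?_
  calc τ / √((n : ℝ) + 1) * a n ≤ τ / √((n : ℝ) + 1) * A := by gcongr; exact ha n
    _ = A * τ * (1 / √((n : ℝ) + 1)) := by ring

end StepSchedule

section Descent

variable {E : Type*} [NormedAddCommGroup E] [InnerProductSpace ℝ E]
  {F : E → ℝ} {F' : E → E} {C : ℝ}

theorem le_add_inner_add_of_lipschitz_gradient
    (hF : ∀ x, HasFDerivAt F (InnerProductSpace.toDualMap ℝ E (F' x)) x)
    (hLip : ∀ x y, ‖F' x - F' y‖ ≤ C * ‖x - y‖) (x v : E) :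
    F (x + v) ≤ F x + ⟪F' x, v⟫ + C / 2 * ‖v‖ ^ 2 := by
  -- `φ` is antitone on `[0, 1]`: its derivative is `⟪F'(x + t v) - F' x, v⟫ - C t ‖v‖² ≤ 0`
  set φ : ℝ → ℝ := fun t => F (x + t • v) - t * ⟪F' x, v⟫ - C / 2 * ‖v‖ ^ 2 * t ^ 2
  have hφ : ∀ t, HasDerivAt φ (⟪F' (x + t • v) - F' x, v⟫ - C * ‖v‖ ^ 2 * t) t := by
    intro t
    have hline : HasDerivAt (fun t : ℝ => x + t • v) v t := by
      simpa using ((hasDerivAt_id t).smul_const v).const_add x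
    have hFline := (hF (x + t • v)).comp_hasDerivAt t hline
    simp only [InnerProductSpace.toDualMap_apply_apply] at hFline
    refine ((hFline.sub ((hasDerivAt_id t).mul_const ⟪F' x, v⟫)).sub
      ((hasDerivAt_pow 2 t).const_mul (C / 2 * ‖v‖ ^ 2))).congr_deriv ?_
    rw [inner_sub_left]
    ring
  have hanti : AntitoneOn φ (Set.Icc 0 1) := by
    refine antitoneOn_of_deriv_nonpos (convex_Icc 0 1)
      (fun t _ => (hφ t).continuousAt.continuousWithinAt)
      (fun t _ => (hφ t).differentiableAt.differentiableWithinAt) fun t ht => ?_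
    rw [interior_Icc] at ht
    have hgrad : ‖F' (x + t • v) - F' x‖ ≤ C * (t * ‖v‖) := by
      simpa [norm_smul, abs_of_pos ht.1] using hLip (x + t • v) x
    calc deriv φ t = ⟪F' (x + t • v) - F' x, v⟫ - C * ‖v‖ ^ 2 * t := (hφ t).deriv
      _ ≤ ‖F' (x + t • v) - F' x‖ * ‖v‖ - C * ‖v‖ ^ 2 * t := by
        gcongr; exact real_inner_le_norm _ _
      _ ≤ 0 := by nlinarith [mul_le_mul_of_nonneg_right hgrad (norm_nonneg v)]
  have h01 := hanti (Set.left_mem_Icc.2 zero_le_one) (Set.right_mem_Icc.2 zero_le_one)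
    zero_le_one
  simp only [φ, zero_smul, add_zero, one_smul] at h01
  linarith

theorem mul_norm_sq_le_of_biased_step
    (hF : ∀ x, HasFDerivAt F (InnerProductSpace.toDualMap ℝ E (F' x)) x)
    (hLip : ∀ x y, ‖F' x - F' y‖ ≤ C * ‖x - y‖) (x d : E) {t : ℝ} (ht : 0 ≤ t) :
    t * ‖F' x‖ ^ 2 ≤
      F x - F (x - t • d) + C / 2 * (t ^ 2 * ‖d‖ ^ 2) + t * (‖F' x‖ * ‖d - F' x‖) := by
  have hdesc := le_add_inner_add_of_lipschitz_gradient hF hLip x (-(t • d))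
  rw [← sub_eq_add_neg, inner_neg_right, real_inner_smul_right, norm_neg, norm_smul,
    Real.norm_of_nonneg ht, mul_pow] at hdesc
  have hinner : ‖F' x‖ ^ 2 - ‖F' x‖ * ‖d - F' x‖ ≤ ⟪F' x, d⟫ := by
    have hsplit : ⟪F' x, d⟫ = ‖F' x‖ ^ 2 + ⟪F' x, d - F' x⟫ := by
      rw [inner_sub_right, real_inner_self_eq_norm_sq]; ring
    linarith [neg_le_of_abs_le (abs_real_inner_le_norm (F' x) (d - F' x))]
  nlinarith [mul_le_mul_of_nonneg_left hinner ht]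

theorem sum_mul_norm_sq_le_of_biased_descent
    (hF : ∀ x, HasFDerivAt F (InnerProductSpace.toDualMap ℝ E (F' x)) x)
    (hLip : ∀ x y, ‖F' x - F' y‖ ≤ C * ‖x - y‖) {t : ℕ → ℝ} (ht : ∀ n, 0 ≤ t n)
    {d θ : ℕ → E} (hθ : ∀ n, θ (n + 1) = θ n - t n • d n) (N : ℕ) :
    ∑ n ∈ range N, t n * ‖F' (θ n)‖ ^ 2 ≤
      F (θ 0) - F (θ N) + C / 2 * ∑ n ∈ range N, t n ^ 2 * ‖d n‖ ^ 2 +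
        ∑ n ∈ range N, t n * (‖F' (θ n)‖ * ‖d n - F' (θ n)‖) := by
  rw [← sum_range_sub' (fun n => F (θ n)), mul_sum, ← sum_add_distrib, ← sum_add_distrib]
  refine sum_le_sum fun n _ => ?_
  rw [hθ n]
  exact mul_norm_sq_le_of_biased_step hF hLip (θ n) (d n) (ht n)

end Descent

theorem biased_gradient_descent_rate_general
    {E : Type*} [NormedAddCommGroup E] [InnerProductSpace ℝ E]
    (F : E → ℝ) (F' : E → E) (hF : ∀ x, HasFDerivAt F (InnerProductSpace.toDualMap ℝ E (F' x)) x)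
    (C : ℝ) (hC : 0 ≤ C) (hLip : ∀ x y, ‖F' x - F' y‖ ≤ C * ‖x - y‖)
    (Fstar : ℝ) (hFstar : ∀ x, Fstar ≤ F x)
    (τ : ℝ) (hτ : 0 < τ) (G G' b : ℝ)
    (h : ℕ → E)
    (θ : ℕ → E) (hθ : ∀ n, θ (n + 1) = θ n - (τ / Real.sqrt (n + 1)) • h n)
    (hhG : ∀ n, ‖h n‖ ≤ G)
    (hbias : ∀ n, ‖h n - F' (θ n)‖ ≤ b)
    (hgrad : ∀ n, ‖F' (θ n)‖ ≤ G') :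
    ∀ N : ℕ, 1 ≤ N →
      (1 / (N : ℝ)) * ∑ n ∈ Finset.range N, ‖F' (θ n)‖ ^ 2 ≤
        (F (θ 0) - Fstar) / (τ * Real.sqrt N) +
          (C * G ^ 2 * τ / 2) * (Real.log N + 1) / Real.sqrt N + 2 * G' * b := by
  intro N hN
  have hsqrtN : 0 < √(N : ℝ) := Real.sqrt_pos.2 (by exact_mod_cast hN)
  have hG' : 0 ≤ G' := (norm_nonneg _).trans (hgrad 0)
  have hb : 0 ≤ b := (norm_nonneg _).trans (hbias 0)
  have hmain : τ / √N * ∑ n ∈ range N, ‖F' (θ n)‖ ^ 2 ≤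
      F (θ 0) - Fstar + C / 2 * (G ^ 2 * τ ^ 2 * (Real.log N + 1)) + G' * b * τ * (2 * √N) := by
    grw [div_sqrt_mul_sum_range_le hτ.le (fun n => sq_nonneg _),
      sum_mul_norm_sq_le_of_biased_descent hF hLip
        (fun n => div_nonneg hτ.le (Real.sqrt_nonneg _)) hθ N,
      sum_range_div_sqrt_succ_sq_mul_le (sq_nonneg G)
        (fun n => pow_le_pow_left₀ (norm_nonneg _) (hhG n) 2),
      sum_range_div_sqrt_succ_mul_le hτ.le (mul_nonneg hG' hb)
        (fun n => mul_le_mul (hgrad n) (hbias n) (norm_nonneg _) hG'),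
      ← hFstar (θ N)]
  calc (1 / (N : ℝ)) * ∑ n ∈ range N, ‖F' (θ n)‖ ^ 2
      = (τ / √N * ∑ n ∈ range N, ‖F' (θ n)‖ ^ 2) / (τ * √N) := by
        field_simp
        rw [Real.sq_sqrt (Nat.cast_nonneg N)]
        ring
    _ ≤ (F (θ 0) - Fstar + C / 2 * (G ^ 2 * τ ^ 2 * (Real.log N + 1)) +
          G' * b * τ * (2 * √N)) / (τ * √N) := by gcongr
    _ = _ := by field_simp

/-- Abstract core of Theorem 3: gradient descent with step sizes `τ_n = τ/√(n+1)`
and persistent gradient-approximation bias `b` on a function bounded below with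
`C`-Lipschitz gradient satisfies
`(1/N) Σ_{n<N} ‖∇F(θ_n)‖² ≤ (F(θ₀) − F*)/(τ√N) + (C G² τ/2)(log N + 1)/√N + 2 G' b`. -/
theorem biased_gradient_descent_rate
    {E : Type*} [NormedAddCommGroup E] [InnerProductSpace ℝ E]
    (F : E → ℝ) (F' : E → E) (hF : ∀ x, HasFDerivAt F (InnerProductSpace.toDualMap ℝ E (F' x)) x)
    (C : ℝ) (hC : 0 ≤ C) (hLip : ∀ x y, ‖F' x - F' y‖ ≤ C * ‖x - y‖)
    (Fstar : ℝ) (hFstar : ∀ x, Fstar ≤ F x)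
    (τ : ℝ) (hτ : 0 < τ) (G G' b : ℝ) (hG : 0 ≤ G) (hG' : 0 ≤ G') (hb : 0 ≤ b)
    (h : ℕ → E)
    (θ : ℕ → E) (hθ : ∀ n, θ (n + 1) = θ n - (τ / Real.sqrt (n + 1)) • h n)
    (hhG : ∀ n, ‖h n‖ ≤ G)
    (hbias : ∀ n, ‖h n - F' (θ n)‖ ≤ b)
    (hgrad : ∀ n, ‖F' (θ n)‖ ≤ G') :
    ∀ N : ℕ, 1 ≤ N →
      (1 / (N : ℝ)) * ∑ n ∈ Finset.range N, ‖F' (θ n)‖ ^ 2 ≤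
        (F (θ 0) - Fstar) / (τ * Real.sqrt N) +
          (C * G ^ 2 * τ / 2) * (Real.log N + 1) / Real.sqrt N + 2 * G' * b :=
  biased_gradient_descent_rate_general F F' hF C hC hLip Fstar hFstar τ hτ G G' b h θ hθ hhG hbias
    hgrad
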